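/- Expanded form theorem: if there is a derivation of α from assumptions Γ in M⊃ natural deduction, then there is a derivation of α from Γ in which every minimal formula occurrence that starts an I-part is atomic (expanded form). In particular, any minimal formula of the form φ₁ ⊃ φ₂ can be replaced by a ⊃-Elim with hypothesis φ₁ followed by a ⊃-Intro discharging φ₁. -/
import Mathlib


inductive Formula where
  | atom : ℕ → Formula
  | imp : Formula → Formula → Formula
deriving DecidableEq

def Formula.isAtom : Formula → Bool
  | .atom _ => true
  | _ => false

/-- Natural deduction proof trees for `M⊃`, indexed by their conclusion. -/
inductive Deriv : Formula → Type
  | hyp (φ : Formula) : Deriv φ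
  | elim {φ ψ : Formula} : Deriv φ → Deriv (Formula.imp φ ψ) → Deriv ψ
  | intro (φ : Formula) {ψ : Formula} : Deriv ψ → Deriv (Formula.imp φ ψ)

/-- The conclusion of a derivation. -/
def Deriv.concl {φ : Formula} (_ : Deriv φ) : Formula := φ

/-- The open assumptions of a derivation. -/
def Deriv.assumptions : {φ : Formula} → Deriv φ → Finset Formula
  | _, .hyp φ => {φ}
  | _, .elim d e => d.assumptions ∪ e.assumptions
  | _, .intro φ d => d.assumptions \ {φ}

/-- Whether a derivation ends with an ⊃-Intro. -/
def Deriv.isIntro : {φ : Formula} → Deriv φ → Bool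
  | _, .intro _ _ => true
  | _, _ => false

/-- Expanded form: every minimal formula occurrence that starts an I-part,
i.e. every premise of an ⊃-Intro that is not itself the conclusion of an
⊃-Intro, is atomic. -/
def Deriv.Expanded : {φ : Formula} → Deriv φ → Prop
  | _, .hyp _ => True
  | _, .elim d e => d.Expanded ∧ e.Expanded
  | _, .intro _ d => d.Expanded ∧ (d.isIntro = true ∨ d.concl.isAtom = true)


def eta : (φ : Formula) → Deriv φ → Deriv φ
  | .atom _, d => d
  | .imp φ₁ φ₂, d => .intro φ₁ (eta φ₂ (.elim (eta φ₁ (.hyp φ₁)) d))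

def expand : {φ : Formula} → Deriv φ → Deriv φ
  | φ, .hyp _ => eta φ (.hyp φ)
  | φ, .elim d e => eta φ (.elim (expand d) (expand e))
  | _, .intro φ d => .intro φ (expand d)

lemma eta_assumptions : ∀ (φ : Formula) (d : Deriv φ),
    (eta φ d).assumptions ⊆ d.assumptions := by
  intro φ
  induction φ with
  | atom n => intro d; simp [eta]
  | imp φ₁ φ₂ ih1 ih2 =>
    intro d
    simp only [eta, Deriv.assumptions]
    intro x hx
    simp only [Finset.mem_sdiff, Finset.mem_singleton] at hx
    obtain ⟨hx1, hx2⟩ := hx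
    have := ih2 _ hx1
    simp only [Deriv.assumptions, Finset.mem_union] at this
    rcases this with h | h
    · have := ih1 _ h
      simp [Deriv.assumptions] at this
      exact absurd this hx2
    · exact h

lemma eta_expanded : ∀ (φ : Formula) (d : Deriv φ),
    d.Expanded → (eta φ d).Expanded := by
  intro φ
  induction φ with
  | atom n => intro d h; simpa [eta]
  | imp φ₁ φ₂ ih1 ih2 =>
    intro d h
    simp only [eta, Deriv.Expanded]
    constructor
    · exact ih2 _ ⟨ih1 _ (by trivial), h⟩
    · cases φ₂ with
      | atom n => right; simp [eta, Deriv.concl, Formula.isAtom]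
      | imp a b => left; simp [eta, Deriv.isIntro]

lemma expand_assumptions : ∀ {φ : Formula} (d : Deriv φ),
    (expand d).assumptions ⊆ d.assumptions := by
  intro φ d
  induction d with
  | hyp φ =>
    exact (eta_assumptions φ _).trans (by simp [Deriv.assumptions])
  | elim d e ih1 ih2 =>
    refine (eta_assumptions _ _).trans ?_
    simp only [Deriv.assumptions]
    exact Finset.union_subset_union ih1 ih2
  | intro φ d ih =>
    simp only [expand, Deriv.assumptions]
    exact Finset.sdiff_subset_sdiff ih (le_refl _)

lemma expand_cond : ∀ {φ : Formula} (d : Deriv φ),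
    (expand d).isIntro = true ∨ (expand d).concl.isAtom = true := by
  intro φ d
  cases φ with
  | atom n => right; simp [Deriv.concl, Formula.isAtom]
  | imp a b =>
    left
    cases d with
    | hyp _ => simp [expand, eta, Deriv.isIntro]
    | elim d e => simp [expand, eta, Deriv.isIntro]
    | intro _ d => simp [expand, Deriv.isIntro]

lemma expand_expanded : ∀ {φ : Formula} (d : Deriv φ),
    (expand d).Expanded := by
  intro φ d
  induction d with
  | hyp φ => exact eta_expanded _ _ trivial
  | elim d e ih1 ih2 => exact eta_expanded _ _ ⟨ih1, ih2⟩
  | intro φ d ih =>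
    exact ⟨ih, expand_cond d⟩

/-- Expanded form theorem: if `α` is derivable from assumptions `Γ` in `M⊃`
natural deduction, then there is a derivation of `α` from `Γ` in expanded
form. -/
theorem expanded_form (Γ : Finset Formula) (α : Formula)
    (h : ∃ d : Deriv α, d.assumptions ⊆ Γ) :
    ∃ d : Deriv α, d.assumptions ⊆ Γ ∧ d.Expanded := by
  obtain ⟨d, hd⟩ := h
  exact ⟨expand d, (expand_assumptions d).trans hd, expand_expanded d⟩
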